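/- arXiv:1810.05398 — 2 statements merged into one kernel-verified Lean document; each statement's English description precedes it below -/
import Mathlib

section
/- Let x ~ Binomial(n, 1/2), and let the posterior odds of H1: p = 0.4 versus H2: p = 0.6 (equal priors) be (0.4/0.6)^(2x−n). Then as n → ∞, the probability that P1 > 1 − α converges to 1/2 for each fixed 0 < α < 1/2, and likewise for P1 < α. -/
/-!
With `B = log((1 - α)/α) / log(3/2) > 0`, the posterior exceeds `1 - α` exactly when
`2x + B < n` and falls below `α` exactly when `n + B < 2x`. By the symmetry `x ↦ n - x` of
`Binomial(n, 1/2)` the two tails have equal mass, and the band `|2x - n| ≤ B` between them holds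
at most `⌈B⌉ + 1` points, each of mass at most `2/√(n+1)` by the bound
`C(2m, m)² (2m + 1) ≤ 16^m`. Hence each tail has mass `(1 - o(1))/2`.
-/

open Real Filter Finset
open scoped Classical

theorem Nat.centralBinom_sq_mul_le (m : ℕ) : m.centralBinom ^ 2 * (2 * m + 1) ≤ 16 ^ m := by
  induction m with
  | zero => simp
  | succ m ih =>
    have hrec := Nat.succ_mul_centralBinom_succ m
    have hquad : (2 * m + 1) * (2 * m + 3) ≤ 4 * (m + 1) ^ 2 := by nlinarith
    refine Nat.le_of_mul_le_mul_left ?_ (by positivity : 0 < (m + 1) ^ 2)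
    calc (m + 1) ^ 2 * ((m + 1).centralBinom ^ 2 * (2 * (m + 1) + 1))
        = 4 * ((2 * m + 1) * (2 * m + 3)) * (m.centralBinom ^ 2 * (2 * m + 1)) := by
          rw [← mul_assoc, ← mul_pow, hrec]; ring
      _ ≤ 4 * (4 * (m + 1) ^ 2) * 16 ^ m := by gcongr
      _ = (m + 1) ^ 2 * 16 ^ (m + 1) := by ring

theorem Nat.centralBinom_div_four_pow_le (m : ℕ) :
    (m.centralBinom : ℝ) / 4 ^ m ≤ 1 / √(2 * m + 1) := by
  have hsq : ((m.centralBinom : ℝ) / 4 ^ m) ^ 2 ≤ 1 / (2 * m + 1) := by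
    rw [div_pow, ← pow_mul, mul_comm, pow_mul, div_le_div_iff₀ (by positivity) (by positivity)]
    norm_num
    exact_mod_cast Nat.centralBinom_sq_mul_le m
  simpa [Real.sqrt_div' 1 (by positivity : (0 : ℝ) ≤ 2 * m + 1)] using Real.le_sqrt_of_sq_le hsq

theorem Nat.choose_mul_half_pow_le (n x : ℕ) :
    (n.choose x : ℝ) * (1 / 2) ^ n ≤ 2 / √(n + 1) := by
  set m := (n + 1) / 2
  have hchoose : (n.choose x : ℝ) ≤ m.centralBinom := by
    exact_mod_cast (Nat.choose_le_choose x (by omega : n ≤ 2 * m)).trans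
      (Nat.choose_le_centralBinom x m)
  have hpow : ((1 : ℝ) / 2) ^ n ≤ 2 / 4 ^ m := by
    calc ((1 : ℝ) / 2) ^ n = 2 * (1 / 2) ^ (n + 1) := by ring
      _ ≤ 2 * (1 / 2) ^ (2 * m) := by
          gcongr 2 * ?_
          exact pow_le_pow_of_le_one (by norm_num) (by norm_num) (by omega)
      _ = 2 / 4 ^ m := by rw [pow_mul, one_div_pow, one_div_pow]; norm_num [div_eq_mul_inv]
  have hsqrt : 1 / √(2 * m + 1) ≤ 1 / √(n + 1) := by
    gcongr
    exact_mod_cast (by omega : n ≤ 2 * m)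
  calc (n.choose x : ℝ) * (1 / 2) ^ n ≤ m.centralBinom * (2 / 4 ^ m) := by gcongr
    _ = 2 * (m.centralBinom / 4 ^ m) := by ring
    _ ≤ 2 * (1 / √(n + 1)) := by grw [Nat.centralBinom_div_four_pow_le m, hsqrt]
    _ = 2 / √(n + 1) := by ring

/-- `P(X ∈ s)` for `X ~ Binomial(n, 1/2)`. -/
noncomputable def binomHalfProb (n : ℕ) (s : ℕ → Prop) [DecidablePred s] : ℝ :=
  ∑ x ∈ range (n + 1), (n.choose x : ℝ) * (1 / 2) ^ n * if s x then 1 else 0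

section binomHalfProb

variable {n : ℕ} {s t : ℕ → Prop} [DecidablePred s] [DecidablePred t]

theorem binomHalfProb_nonneg : 0 ≤ binomHalfProb n s :=
  sum_nonneg fun x _ => by split_ifs <;> positivity

theorem binomHalfProb_congr (h : ∀ x ≤ n, s x ↔ t x) : binomHalfProb n s = binomHalfProb n t :=
  sum_congr rfl fun x hx => by rw [if_congr (h x (mem_range_succ_iff.mp hx)) rfl rfl]

theorem binomHalfProb_add_not : binomHalfProb n s + binomHalfProb n (fun x => ¬s x) = 1 := by
  rw [binomHalfProb, binomHalfProb, ← sum_add_distrib]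
  calc ∑ x ∈ range (n + 1), ((n.choose x : ℝ) * (1 / 2) ^ n * (if s x then 1 else 0) +
        (n.choose x : ℝ) * (1 / 2) ^ n * if ¬s x then 1 else 0)
      = (∑ x ∈ range (n + 1), (n.choose x : ℝ)) * (1 / 2) ^ n := by
        rw [sum_mul]
        exact sum_congr rfl fun x _ => by by_cases h : s x <;> simp [h]
    _ = 1 := by
        rw [← Nat.cast_sum, Nat.sum_range_choose, Nat.cast_pow, ← mul_pow]
        norm_num

theorem binomHalfProb_or (h : ∀ x, ¬(s x ∧ t x)) :
    binomHalfProb n (fun x => s x ∨ t x) = binomHalfProb n s + binomHalfProb n t := by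
  rw [binomHalfProb, binomHalfProb, binomHalfProb, ← sum_add_distrib]
  refine sum_congr rfl fun x _ => ?_
  by_cases hs : s x <;> by_cases ht : t x <;> simp [hs, ht]
  exact (h x ⟨hs, ht⟩).elim

theorem binomHalfProb_reflect : binomHalfProb n s = binomHalfProb n (fun x => s (n - x)) := by
  rw [binomHalfProb, binomHalfProb, ← sum_range_reflect]
  refine sum_congr rfl fun x hx => ?_
  rw [Nat.add_sub_cancel, Nat.choose_symm (mem_range_succ_iff.mp hx)]

theorem binomHalfProb_le_of_subset_Ico {a k : ℕ} (h : ∀ x, s x → x ∈ Ico a (a + k)) :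
    binomHalfProb n s ≤ k * (2 / √(n + 1)) := by
  simp only [binomHalfProb, mul_ite, mul_one, mul_zero]
  rw [← sum_filter]
  have hcard : #{x ∈ range (n + 1) | s x} ≤ k := by
    simpa using card_le_card fun x hx => h x (mem_filter.mp hx).2
  calc ∑ x ∈ range (n + 1) with s x, (n.choose x : ℝ) * (1 / 2) ^ n
      ≤ ∑ x ∈ range (n + 1) with s x, 2 / √(n + 1) :=
        sum_le_sum fun x _ => Nat.choose_mul_half_pow_le n x
    _ = #{x ∈ range (n + 1) | s x} * (2 / √(n + 1)) := by rw [sum_const, nsmul_eq_mul]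
    _ ≤ k * (2 / √(n + 1)) := by gcongr

end binomHalfProb

theorem binomHalfProb_upper_tail_eq_lower (n : ℕ) (B : ℝ) :
    binomHalfProb n (fun x => n + B < 2 * (x : ℝ)) = binomHalfProb n (fun x => 2 * (x : ℝ) + B < n) := by
  rw [binomHalfProb_reflect]
  exact binomHalfProb_congr fun x hx => by
    rw [Nat.cast_sub hx]; constructor <;> intro <;> linarith

theorem binomHalfProb_central_band_le (n : ℕ) (B : ℝ) :
    binomHalfProb n (fun x => n ≤ 2 * (x : ℝ) + B ∧ 2 * (x : ℝ) ≤ n + B) ≤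
      (⌈B⌉₊ + 1) * (2 / √(n + 1)) := by
  have h := binomHalfProb_le_of_subset_Ico (n := n) (a := ⌈(n - B) / 2⌉₊) (k := ⌈B⌉₊ + 1)
    (s := fun x => n ≤ 2 * (x : ℝ) + B ∧ 2 * (x : ℝ) ≤ n + B) fun x ⟨hlo, hhi⟩ => by
      have hceil := Nat.le_ceil ((n - B) / 2)
      have hB := Nat.le_ceil B
      refine mem_Ico.mpr ⟨Nat.ceil_le.mpr (by linarith), Nat.lt_succ_iff.mpr ?_⟩
      exact_mod_cast (by linarith : (x : ℝ) ≤ ⌈(n - B) / 2⌉₊ + ⌈B⌉₊)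
  exact_mod_cast h

theorem tendsto_binomHalfProb_central_band (B : ℝ) :
    Tendsto (fun n => binomHalfProb n (fun x => n ≤ 2 * (x : ℝ) + B ∧ 2 * (x : ℝ) ≤ n + B))
      atTop (nhds 0) := by
  have hsqrt : Tendsto (fun n : ℕ => √((n : ℝ) + 1)) atTop atTop :=
    Real.tendsto_sqrt_atTop.comp (tendsto_atTop_add_const_right _ 1 tendsto_natCast_atTop_atTop)
  have hbound := (tendsto_const_nhds (x := (2 : ℝ))).div_atTop hsqrt |>.const_mul (⌈B⌉₊ + 1 : ℝ)
  rw [mul_zero] at hbound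
  exact squeeze_zero (fun n => binomHalfProb_nonneg) (fun n => binomHalfProb_central_band_le n B)
    hbound

theorem tendsto_binomHalfProb_lower_tail {B : ℝ} (hB : 0 ≤ B) :
    Tendsto (fun n => binomHalfProb n (fun x => 2 * (x : ℝ) + B < n)) atTop (nhds (1 / 2)) := by
  have hsplit : ∀ n : ℕ, binomHalfProb n (fun x => 2 * (x : ℝ) + B < n) =
      (1 - binomHalfProb n (fun x => n ≤ 2 * (x : ℝ) + B ∧ 2 * (x : ℝ) ≤ n + B)) / 2 := by
    intro n
    have htotal := binomHalfProb_add_not (n := n)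
      (s := fun x => 2 * (x : ℝ) + B < n ∨ n + B < 2 * (x : ℝ))
    have hband : binomHalfProb n (fun x => ¬(2 * (x : ℝ) + B < n ∨ n + B < 2 * (x : ℝ))) =
        binomHalfProb n (fun x => n ≤ 2 * (x : ℝ) + B ∧ 2 * (x : ℝ) ≤ n + B) :=
      binomHalfProb_congr fun x _ => by simp only [not_or, not_lt]
    rw [binomHalfProb_or fun x h => by linarith [h.1, h.2], binomHalfProb_upper_tail_eq_lower,
      hband] at htotal
    linarith
  have hlim := (tendsto_const_nhds (x := (1 : ℝ))).sub (tendsto_binomHalfProb_central_band B)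
    |>.div_const 2
  rw [sub_zero] at hlim
  exact hlim.congr fun n => (hsplit n).symm

theorem tendsto_binomHalfProb_upper_tail {B : ℝ} (hB : 0 ≤ B) :
    Tendsto (fun n => binomHalfProb n (fun x => n + B < 2 * (x : ℝ))) atTop (nhds (1 / 2)) := by
  simpa only [binomHalfProb_upper_tail_eq_lower] using tendsto_binomHalfProb_lower_tail hB

theorem one_sub_lt_div_add_iff {a b α : ℝ} (ha : 0 < a) (hb : 0 < b) :
    1 - α < a / (a + b) ↔ (1 - α) * b < α * a := by
  rw [lt_div_iff₀ (by positivity)]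
  constructor <;> intro h <;> linarith

theorem div_add_lt_iff {a b α : ℝ} (ha : 0 < a) (hb : 0 < b) :
    a / (a + b) < α ↔ (1 - α) * a < α * b := by
  rw [div_lt_iff₀ (by positivity)]
  constructor <;> intro h <;> linarith

theorem mul_pow_mul_pow_lt_iff {p q c d : ℝ} (hp : 0 < p) (hq : 0 < q) (hc : 0 < c) (hd : 0 < d)
    {n x : ℕ} (hx : x ≤ n) :
    c * (q ^ x * p ^ (n - x)) < d * (p ^ x * q ^ (n - x)) ↔
      (2 * x - n) * (log q - log p) < log d - log c := by
  have hlog : log (d * (p ^ x * q ^ (n - x))) - log (c * (q ^ x * p ^ (n - x))) =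
      log d - log c - (2 * x - n) * (log q - log p) := by
    rw [log_mul hd.ne' (by positivity), log_mul hc.ne' (by positivity),
      log_mul (by positivity) (by positivity), log_mul (by positivity) (by positivity),
      log_pow, log_pow, log_pow, log_pow, Nat.cast_sub hx]
    ring
  rw [← log_lt_log_iff (by positivity) (by positivity)]
  constructor <;> intro h <;> linarith

theorem one_sub_lt_posterior_iff {p q α : ℝ} (hp : 0 < p) (hpq : p < q) (hα0 : 0 < α)
    (hα1 : α < 1) {n x : ℕ} (hx : x ≤ n) :
    1 - α < (n.choose x : ℝ) * p ^ x * q ^ (n - x) /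
        ((n.choose x : ℝ) * p ^ x * q ^ (n - x) + (n.choose x : ℝ) * q ^ x * p ^ (n - x)) ↔
      2 * (x : ℝ) + (log (1 - α) - log α) / (log q - log p) < n := by
  have hC : (0 : ℝ) < n.choose x := by exact_mod_cast Nat.choose_pos hx
  have hq : 0 < q := hp.trans hpq
  have hlog : 0 < log q - log p := sub_pos.mpr (log_lt_log hp hpq)
  rw [one_sub_lt_div_add_iff (by positivity) (by positivity), mul_assoc, mul_assoc, mul_left_comm, mul_left_comm α, mul_lt_mul_iff_right₀ hC,
    mul_pow_mul_pow_lt_iff hp hq (by linarith) hα0 hx, ← lt_sub_iff_add_lt', div_lt_iff₀ hlog]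
  constructor <;> intro h <;> linarith

theorem posterior_lt_iff {p q α : ℝ} (hp : 0 < p) (hpq : p < q) (hα0 : 0 < α)
    (hα1 : α < 1) {n x : ℕ} (hx : x ≤ n) :
    (n.choose x : ℝ) * p ^ x * q ^ (n - x) /
        ((n.choose x : ℝ) * p ^ x * q ^ (n - x) + (n.choose x : ℝ) * q ^ x * p ^ (n - x)) < α ↔
      n + (log (1 - α) - log α) / (log q - log p) < 2 * (x : ℝ) := by
  have hC : (0 : ℝ) < n.choose x := by exact_mod_cast Nat.choose_pos hx
  have hq : 0 < q := hp.trans hpq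
  have hlog : 0 < log q - log p := sub_pos.mpr (log_lt_log hp hpq)
  rw [div_add_lt_iff (by positivity) (by positivity), mul_assoc, mul_assoc, mul_left_comm, mul_left_comm α, mul_lt_mul_iff_right₀ hC,
    mul_pow_mul_pow_lt_iff hq hp (by linarith) hα0 hx, ← lt_sub_iff_add_lt', div_lt_iff₀ hlog]
  constructor <;> intro h <;> linarith

/-- Fair-coin paradox: with `x ~ Binomial(n, 1/2)` and posterior probability
`P1` of `H1 : p = 0.4` versus `H2 : p = 0.6` (equal priors), for each fixed
`0 < α < 1/2` the probability that `P1 > 1 - α` converges to `1/2`, and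
likewise for `P1 < α`. -/
theorem fair_coin_polarized_limit
    (α : ℝ) (hα0 : 0 < α) (hα : α < 1 / 2)
    (P1 : ℕ → ℕ → ℝ)
    (hP1 : ∀ n x, P1 n x =
      ((n.choose x : ℝ) * (0.4 : ℝ) ^ x * (0.6 : ℝ) ^ (n - x)) /
        ((n.choose x : ℝ) * (0.4 : ℝ) ^ x * (0.6 : ℝ) ^ (n - x) +
          (n.choose x : ℝ) * (0.6 : ℝ) ^ x * (0.4 : ℝ) ^ (n - x))) :
    Tendsto (fun n : ℕ =>
        ∑ x ∈ Finset.range (n + 1),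
          (n.choose x : ℝ) * (1 / 2 : ℝ) ^ n *
            (if 1 - α < P1 n x then 1 else 0))
      atTop (nhds (1 / 2)) ∧
    Tendsto (fun n : ℕ =>
        ∑ x ∈ Finset.range (n + 1),
          (n.choose x : ℝ) * (1 / 2 : ℝ) ^ n *
            (if P1 n x < α then 1 else 0))
      atTop (nhds (1 / 2)) := by
  have hα1 : α < 1 := by linarith
  have hB : 0 ≤ (log (1 - α) - log α) / (log 0.6 - log 0.4) :=
    div_nonneg (sub_nonneg.mpr (log_le_log hα0 (by linarith)))
      (sub_nonneg.mpr (log_le_log (by norm_num) (by norm_num)))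
  constructor
  · show Tendsto (fun n => binomHalfProb n fun x => 1 - α < P1 n x) atTop _
    refine (tendsto_binomHalfProb_lower_tail hB).congr fun n => binomHalfProb_congr fun x hx => ?_
    rw [hP1, one_sub_lt_posterior_iff (by norm_num) (by norm_num) hα0 hα1 hx]
  · show Tendsto (fun n => binomHalfProb n fun x => P1 n x < α) atTop _
    refine (tendsto_binomHalfProb_upper_tail hB).congr fun n => binomHalfProb_congr fun x hx => ?_
    rw [hP1, posterior_lt_iff (by norm_num) (by norm_num) hα0 hα1 hx]
end

section
/- If the truth is p = 1/2 and the compared models are H1: p = q1 and H2: p = q2 with 0 < q1 < q2 < 1/2 (both wrong in the same direction), then the posterior probability of the less wrong model H2 converges to 1 almost surely as n → ∞. -/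
/-!
Under `H1` versus `H2` the log likelihood ratio after `n` tosses is the i.i.d. sum
`∑ i < n, logLikRatio q₁ q₂ (X i)`, whose summands have mean `D(½‖q₂) - D(½‖q₁) < 0` under the
fair coin. By the strong law of large numbers this sum tends to `-∞` almost surely, so the
likelihood ratio `∏ bernoulliLik q₁ (X i) / ∏ bernoulliLik q₂ (X i)` tends to `0` and the posterior
`1 / (1 + ratio)` of `H2` tends to `1`.
-/

open Real Filter Finset MeasureTheory ProbabilityTheory
open scoped Topology

lemma prod_div_prod_eq_exp_sum_log {ι : Type*} (s : Finset ι) {f g : ι → ℝ}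
    (hf : ∀ i ∈ s, 0 < f i) (hg : ∀ i ∈ s, 0 < g i) :
    (∏ i ∈ s, f i) / ∏ i ∈ s, g i = exp (∑ i ∈ s, log (f i / g i)) := by
  rw [exp_sum, ← prod_div_distrib]
  exact prod_congr rfl fun i hi ↦ (exp_log (div_pos (hf i hi) (hg i hi))).symm

lemma tendsto_atBot_of_tendsto_div_natCast {S : ℕ → ℝ} {m : ℝ} (hm : m < 0)
    (h : Tendsto (fun n ↦ S n / n) atTop (𝓝 m)) : Tendsto S atTop atBot := by
  refine (tendsto_natCast_atTop_atTop.atTop_mul_neg hm h).congr' ?_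
  filter_upwards [eventually_ne_atTop 0] with n hn
  field_simp

lemma tendsto_div_add_self_of_tendsto_div {α : Type*} {l : Filter α} {a b : α → ℝ}
    (hb : ∀ᶠ x in l, b x ≠ 0) (h : Tendsto (fun x ↦ a x / b x) l (𝓝 0)) :
    Tendsto (fun x ↦ b x / (a x + b x)) l (𝓝 1) := by
  have : Tendsto (fun x ↦ (a x / b x + 1)⁻¹) l (𝓝 1) := by
    simpa using (h.add_const 1).inv₀ (by norm_num)
  refine this.congr' ?_
  filter_upwards [hb] with x hx
  rw [div_add_one hx, inv_div]

section BoolRandomVariable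

variable {Ω : Type*} [MeasurableSpace Ω] {μ : Measure Ω} [IsProbabilityMeasure μ]

lemma measure_preimage_false_eq_one_sub {X : Ω → Bool} (hX : Measurable X) :
    μ (X ⁻¹' {false}) = 1 - μ (X ⁻¹' {true}) := by
  rw [← prob_compl_eq_one_sub (hX (measurableSet_singleton true)), ← Set.preimage_compl,
    Bool.compl_singleton, Bool.not_true]

lemma identDistrib_of_measure_preimage_true_eq {X Y : Ω → Bool} (hX : Measurable X)
    (hY : Measurable Y) (h : μ (X ⁻¹' {true}) = μ (Y ⁻¹' {true})) : IdentDistrib X Y μ μ where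
  aemeasurable_fst := hX.aemeasurable
  aemeasurable_snd := hY.aemeasurable
  map_eq := Measure.ext_of_singleton <| by
    rintro (_ | _) <;>
      simp only [Measure.map_apply hX (measurableSet_singleton _),
        Measure.map_apply hY (measurableSet_singleton _),
        measure_preimage_false_eq_one_sub hX, measure_preimage_false_eq_one_sub hY, h]

lemma integral_comp_bool {X : Ω → Bool} (hX : Measurable X) (f : Bool → ℝ) :
    ∫ ω, f (X ω) ∂μ = μ.real (X ⁻¹' {true}) * f true + μ.real (X ⁻¹' {false}) * f false := by
  rw [← integral_map hX.aemeasurable (by fun_prop), integral_fintype .of_finite]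
  simp [map_measureReal_apply hX (measurableSet_singleton _), add_comm]

lemma integral_comp_of_measure_preimage_true_eq_half {X : Ω → Bool} (hX : Measurable X)
    (hfair : μ (X ⁻¹' {true}) = 1 / 2) (f : Bool → ℝ) :
    ∫ ω, f (X ω) ∂μ = (f true + f false) / 2 := by
  have hfalse : μ (X ⁻¹' {false}) = 1 / 2 := by
    rw [measure_preimage_false_eq_one_sub hX, hfair, one_div, ENNReal.one_sub_inv_two]
  simp only [integral_comp_bool hX, measureReal_def, hfair, hfalse]
  norm_num
  ring

theorem ae_tendsto_avg_comp_of_measure_preimage_true_eq {X : ℕ → Ω → Bool}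
    (hX : ∀ i, Measurable (X i)) (hindep : Pairwise fun i j ↦ X i ⟂ᵢ[μ] X j)
    (hident : ∀ i, μ (X i ⁻¹' {true}) = μ (X 0 ⁻¹' {true})) (f : Bool → ℝ) :
    ∀ᵐ ω ∂μ, Tendsto (fun n : ℕ ↦ (∑ i ∈ range n, f (X i ω)) / n) atTop
      (𝓝 (∫ ω, f (X 0 ω) ∂μ)) :=
  strong_law_ae_real (fun i ↦ f ∘ X i) (Integrable.of_finite.comp_measurable (hX 0))
    (fun _ _ hij ↦ (hindep hij).comp (measurable_of_finite f) (measurable_of_finite f))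
    fun i ↦ (identDistrib_of_measure_preimage_true_eq (hX i) (hX 0) (hident i)).comp
      (measurable_of_finite f)

end BoolRandomVariable

def bernoulliLik (q : ℝ) (b : Bool) : ℝ := if b then q else 1 - q

noncomputable def logLikRatio (q₁ q₂ : ℝ) (b : Bool) : ℝ :=
  log (bernoulliLik q₁ b / bernoulliLik q₂ b)

lemma bernoulliLik_pos {q : ℝ} (h0 : 0 < q) (h1 : q < 1) (b : Bool) : 0 < bernoulliLik q b := by
  cases b <;> simp [bernoulliLik, h0, h1]

-- The sum is `log (q₁ (1 - q₁) / (q₂ (1 - q₂)))`, and `q₁ + q₂ < 1` says exactly that `q₂` is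
-- closer to `1/2` than `q₁`.
lemma logLikRatio_true_add_false_neg {q₁ q₂ : ℝ} (h0 : 0 < q₁) (h12 : q₁ < q₂)
    (hsum : q₁ + q₂ < 1) : logLikRatio q₁ q₂ true + logLikRatio q₁ q₂ false < 0 := by
  have hq₁ : 0 < q₁ * (1 - q₁) := mul_pos h0 (by linarith)
  have hq₂ : 0 < q₂ * (1 - q₂) := mul_pos (by linarith) (by linarith)
  have hlt : q₁ * (1 - q₁) < q₂ * (1 - q₂) := by nlinarith
  simp only [logLikRatio, bernoulliLik, if_true, Bool.false_eq_true, if_false]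
  rw [← log_mul (div_pos h0 (by linarith)).ne' (div_pos (by linarith) (by linarith)).ne',
    div_mul_div_comm]
  exact log_neg (div_pos hq₁ hq₂) ((div_lt_one hq₂).2 hlt)

/-- If the truth is `p = 1/2` and the compared models are `H1 : p = q₁` and
`H2 : p = q₂` with `0 < q₁ < q₂ < 1/2` (both wrong in the same direction),
then the posterior probability of the less wrong model `H2` converges to `1`
almost surely as `n → ∞`. -/
theorem less_wrong_model_wins_as
    {Ω : Type*} [MeasurableSpace Ω] (μ : Measure Ω) [IsProbabilityMeasure μ]
    (X : ℕ → Ω → Bool)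
    (hmeas : ∀ i, Measurable (X i))
    (hindep : iIndepFun X μ)
    (hfair : ∀ i, μ (X i ⁻¹' {true}) = 1 / 2)
    (q₁ q₂ : ℝ) (h0 : 0 < q₁) (h12 : q₁ < q₂) (h2 : q₂ < 1 / 2)
    (P2 : ℕ → Ω → ℝ)
    (hP2 : ∀ n ω, P2 n ω =
      (∏ i ∈ Finset.range n, (if X i ω then q₂ else 1 - q₂)) /
        ((∏ i ∈ Finset.range n, (if X i ω then q₁ else 1 - q₁)) +
          (∏ i ∈ Finset.range n, (if X i ω then q₂ else 1 - q₂)))) :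
    ∀ᵐ ω ∂μ, Tendsto (fun n => P2 n ω) atTop (nhds 1) := by
  have hlik₁ := bernoulliLik_pos h0 (by linarith : q₁ < 1)
  have hlik₂ := bernoulliLik_pos (h0.trans h12) (by linarith : q₂ < 1)
  have hmean : (logLikRatio q₁ q₂ true + logLikRatio q₁ q₂ false) / 2 < 0 := by
    linarith [logLikRatio_true_add_false_neg h0 h12 (by linarith)]
  have hslln := ae_tendsto_avg_comp_of_measure_preimage_true_eq hmeas
    (fun _ _ hij ↦ hindep.indepFun hij) (fun i ↦ by rw [hfair, hfair]) (logLikRatio q₁ q₂)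
  rw [integral_comp_of_measure_preimage_true_eq_half (hmeas 0) (hfair 0)] at hslln
  filter_upwards [hslln] with ω hω
  have hllr : Tendsto (fun n ↦ ∑ i ∈ range n, logLikRatio q₁ q₂ (X i ω)) atTop atBot :=
    tendsto_atBot_of_tendsto_div_natCast hmean hω
  have hratio : Tendsto (fun n ↦ (∏ i ∈ range n, bernoulliLik q₁ (X i ω)) /
      ∏ i ∈ range n, bernoulliLik q₂ (X i ω)) atTop (𝓝 0) := by
    simp only [prod_div_prod_eq_exp_sum_log _ (fun i _ ↦ hlik₁ (X i ω)) fun i _ ↦ hlik₂ (X i ω)]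
    exact tendsto_exp_atBot.comp hllr
  simp only [hP2]
  exact tendsto_div_add_self_of_tendsto_div
    (.of_forall fun n ↦ (prod_pos fun i _ ↦ hlik₂ (X i ω)).ne') hratio
end
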